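/- Every biinfinite quasi-fixed point of a constant-length-k substitution φ (k ≥ 2) is k-automatic. -/

import Mathlib

/-- The extension of a substitution `φ : A → A*` to finite words, by concatenation. -/
def substWord {A : Type*} (φ : A → List A) (w : List A) : List A := w.flatMap φ

/-- The extension of a substitution of constant length `k` to biinfinite sequences:
position `0` of the image is the start of `φ(x 0)`. -/
def substZ {A : Type*} [Inhabited A] (φ : A → List A) (k : ℕ) (x : ℤ → A) : ℤ → A :=
  fun n => (φ (x (Int.fdiv n (k : ℤ)))).getD (Int.fmod n (k : ℤ)).toNat default

/-- The shift `T^c` on biinfinite sequences (`T` is the left shift). -/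
def shiftZ {A : Type*} (c : ℤ) (x : ℤ → A) : ℤ → A := fun n => x (n + c)

/-- The composition `Ψ_{i_{m-1}} ∘ ⋯ ∘ Ψ_{i_0}` of the column maps of a substitution of
constant length `k`, where `Ψ_i` sends a letter `a` to the `i`-th letter of `φ(a)`. -/
def psiWord {A : Type*} [Inhabited A] (φ : A → List A) {m k : ℕ} (i : Fin m → Fin k) : A → A :=
  fun a => (List.ofFn i).foldl (fun b j => (φ b).getD (j : ℕ) default) a

/-- The `k`-kernel of a biinfinite sequence `x`: the set of subsequences
`n ↦ x (k^m * n + j)` for `m ≥ 0` and `0 ≤ j < k^m`. -/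
def kernelK {A : Type*} (k : ℕ) (x : ℤ → A) : Set (ℤ → A) :=
  {y | ∃ (m j : ℕ), j < k ^ m ∧ y = fun n => x ((k : ℤ) ^ m * n + (j : ℤ))}

/-!
An `M`-th power of `φ` is a substitution of constant length `K = k ^ M`, so a quasi-fixed point
`z = T^c (φ^M z)` satisfies `z (K q + r - c) = G r (z q)` for `0 ≤ r < K` and suitable letter maps
`G r`. Peeling off `M` digits at a time, every kernel sequence `n ↦ z (k^m n + j)` becomes a letter
map applied to `n ↦ z (k^r n + d)` with `r < M`; since `K ≥ 2`, the offsets `d` never leave the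
window `[-|c|, K + |c|]`, so only finitely many such sequences arise.
-/

open Set

section Substitution

variable {A : Type*} [Inhabited A] (φ : A → List A) {k : ℕ}

theorem substZ_mul_add (hk : 0 < k) (x : ℤ → A) {q r : ℤ} (hr₀ : 0 ≤ r) (hrk : r < k) :
    substZ φ k x (k * q + r) = (φ (x q)).getD r.toNat default := by
  have hkZ : (0 : ℤ) < k := by exact_mod_cast hk
  simp only [substZ, Int.fdiv_eq_ediv_of_nonneg _ hkZ.le, Int.fmod_eq_emod_of_nonneg _ hkZ.le,
    Int.mul_add_ediv_left _ _ hkZ.ne', Int.ediv_eq_zero_of_lt hr₀ hrk, add_zero,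
    Int.mul_add_emod_self_left, Int.emod_eq_of_lt hr₀ hrk]

theorem exists_iterate_substZ_mul_add (hk : 0 < k) (M : ℕ) :
    ∃ G : ℤ → A → A, ∀ (x : ℤ → A) (q r : ℤ), 0 ≤ r → r < (k : ℤ) ^ M →
      (substZ φ k)^[M] x ((k : ℤ) ^ M * q + r) = G r (x q) := by
  have hkZ : (0 : ℤ) < k := by exact_mod_cast hk
  induction M with
  | zero => exact ⟨fun _ a => a, fun x q r hr₀ hr => by simp [show r = 0 by simp at hr; omega]⟩
  | succ M ih =>
    obtain ⟨G, hG⟩ := ih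
    refine ⟨fun r a => (φ (G (r / k) a)).getD (r % k).toNat default, fun x q r hr₀ hr => ?_⟩
    have hsplit : (k : ℤ) ^ (M + 1) * q + r = k * ((k : ℤ) ^ M * q + r / k) + r % k := by
      have := Int.mul_ediv_add_emod r k
      rw [pow_succ]; linear_combination -this
    have hquot : r / k < (k : ℤ) ^ M := (Int.ediv_lt_iff_lt_mul hkZ).2 (by rwa [← pow_succ])
    rw [hsplit, Function.iterate_succ_apply',
      substZ_mul_add φ hk _ (Int.emod_nonneg r hkZ.ne') (Int.emod_lt_of_pos r hkZ),
      hG x q _ (Int.ediv_nonneg hr₀ hkZ.le) hquot]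

end Substitution

section Kernel

variable {A : Type*}

def kSubseq (k : ℕ) (x : ℤ → A) (m : ℕ) (j : ℤ) : ℤ → A := fun n => x ((k : ℤ) ^ m * n + j)

theorem ediv_mem_Icc_neg_abs {K P c j : ℤ} (hK : 2 ≤ K) (hj : j ∈ Icc (-|c|) (K * P + |c|)) :
    (j + c) / K ∈ Icc (-|c|) (P + |c|) := by
  have hc := abs_nonneg c
  have hc₁ := neg_abs_le c
  have hc₂ := le_abs_self c
  obtain ⟨hj₁, hj₂⟩ := hj
  constructor
  · rw [Int.le_ediv_iff_mul_le (by omega)]; nlinarith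
  · rw [Int.ediv_le_iff_le_mul (by omega)]; nlinarith

variable {k M : ℕ} {c : ℤ} {z : ℤ → A} {G : ℤ → A → A}

theorem kSubseq_add_eq_comp_of_recurrence
    (hG : ∀ q r, 0 ≤ r → r < (k : ℤ) ^ M → z ((k : ℤ) ^ M * q + r - c) = G r (z q))
    (hk : 0 < k) (m : ℕ) (j : ℤ) :
    kSubseq k z (m + M) j = G ((j + c) % (k : ℤ) ^ M) ∘ kSubseq k z m ((j + c) / (k : ℤ) ^ M) := by
  have hK : (0 : ℤ) < (k : ℤ) ^ M := by positivity
  funext n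
  have hsplit : (k : ℤ) ^ (m + M) * n + j
      = (k : ℤ) ^ M * ((k : ℤ) ^ m * n + (j + c) / (k : ℤ) ^ M) + (j + c) % (k : ℤ) ^ M - c := by
    have := Int.mul_ediv_add_emod (j + c) ((k : ℤ) ^ M)
    rw [pow_add]; linear_combination -this
  simp only [kSubseq, Function.comp_apply]
  rw [hsplit, hG _ _ (Int.emod_nonneg _ hK.ne') (Int.emod_lt_of_pos _ hK)]

theorem exists_kSubseq_eq_comp_of_recurrence
    (hG : ∀ q r, 0 ≤ r → r < (k : ℤ) ^ M → z ((k : ℤ) ^ M * q + r - c) = G r (z q))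
    (hk : 2 ≤ k) (hM : 0 < M) (m : ℕ) :
    ∀ j ∈ Icc (-|c|) ((k : ℤ) ^ m + |c|), ∃ g : A → A, ∃ r < M,
      ∃ d ∈ Icc (-|c|) ((k : ℤ) ^ M + |c|), kSubseq k z m j = g ∘ kSubseq k z r d := by
  induction m using Nat.strong_induction_on with
  | _ m ih =>
    intro j hj
    by_cases hmM : m < M
    · have hpow : (k : ℤ) ^ m ≤ (k : ℤ) ^ M := pow_le_pow_right₀ (by omega) hmM.le
      exact ⟨id, m, hmM, j, ⟨hj.1, hj.2.trans (by linarith)⟩, rfl⟩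
    · obtain ⟨m, rfl⟩ : ∃ m', m = m' + M := ⟨m - M, by omega⟩
      have hK : (2 : ℤ) ≤ (k : ℤ) ^ M :=
        (show (2 : ℤ) ≤ k by exact_mod_cast hk).trans (le_self_pow₀ (by omega) hM.ne')
      have hj' := ediv_mem_Icc_neg_abs (P := (k : ℤ) ^ m) hK (by rwa [mul_comm, ← pow_add])
      obtain ⟨g, r, hr, d, hd, hgd⟩ := ih m (by omega) _ hj'
      rw [kSubseq_add_eq_comp_of_recurrence hG (by omega), hgd]
      exact ⟨_ ∘ g, r, hr, d, hd, rfl⟩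

theorem kernelK_finite_of_recurrence [Finite A]
    (hG : ∀ q r, 0 ≤ r → r < (k : ℤ) ^ M → z ((k : ℤ) ^ M * q + r - c) = G r (z q))
    (hk : 2 ≤ k) (hM : 0 < M) : (kernelK k z).Finite := by
  have hfin : ((univ : Set (A → A)) ×ˢ Iio M ×ˢ Icc (-|c|) ((k : ℤ) ^ M + |c|)).Finite :=
    finite_univ.prod ((finite_Iio M).prod (finite_Icc _ _))
  refine (hfin.image fun p => p.1 ∘ kSubseq k z p.2.1 p.2.2).subset ?_
  rintro _ ⟨m, j, hj, rfl⟩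
  have hjZ : (j : ℤ) < (k : ℤ) ^ m := by exact_mod_cast hj
  obtain ⟨g, r, hr, d, hd, hgd⟩ := exists_kSubseq_eq_comp_of_recurrence hG hk hM m j
    ⟨by linarith [abs_nonneg c, Int.natCast_nonneg j], by linarith [abs_nonneg c]⟩
  exact ⟨(g, r, d), ⟨mem_univ g, hr, hd⟩, hgd.symm⟩

end Kernel

theorem quasiFixed_is_automatic_general {A : Type*} [Inhabited A] [Fintype A]
    (φ : A → List A) (k : ℕ) (hk : 2 ≤ k)
    (z : ℤ → A) (hz : ∃ (m : ℕ) (c : ℤ), 1 ≤ m ∧ shiftZ c ((substZ φ k)^[m] z) = z) :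
    (kernelK k z).Finite := by
  obtain ⟨M, c, hM, hzc⟩ := hz
  obtain ⟨G, hG⟩ := exists_iterate_substZ_mul_add φ (by omega : 0 < k) M
  refine kernelK_finite_of_recurrence (c := c) (G := G) (fun q r hr₀ hr => ?_) hk hM
  rw [← congrFun hzc, shiftZ, sub_add_cancel, hG z q r hr₀ hr]

/-- Every biinfinite quasi-fixed point of a substitution `φ` of constant length `k ≥ 2`
on a finite alphabet is `k`-automatic: its `k`-kernel is finite. -/
theorem quasiFixed_is_automatic {A : Type*} [Inhabited A] [Fintype A]
    (φ : A → List A) (k : ℕ) (hk : 2 ≤ k) (hlen : ∀ a, (φ a).length = k)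
    (z : ℤ → A) (hz : ∃ (m : ℕ) (c : ℤ), 1 ≤ m ∧ shiftZ c ((substZ φ k)^[m] z) = z) :
    (kernelK k z).Finite :=
  quasiFixed_is_automatic_general φ k hk z hz
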